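/- Let c ≥ 7, S = ℚ[x_i : i ∈ ℤ/cℤ], and let g_1, …, g_N be the quadric generating set of I_F consisting of the binomials q_i = x_i² − x_{i−1}x_{i−3} (i ∈ ℤ/cℤ) and the monomials m_t = x_a x_b over all pairs {a, b} of cyclic distance ≥ 3. Let Syz ⊆ S^N be the kernel of the map S^N → S sending the standard basis vector e_α to g_α, and let Z ⊆ Syz be the submodule generated by (i) all syzygies whose coordinates are all homogeneous linear forms, and (ii) all Koszul syzygies g_β e_α − g_α e_β. Then the quadratic syzygy u whose coordinate on the generator q_i is x_{i−1}x_{i−2} for each i ∈ ℤ/cℤ and whose coordinates on the monomial generators are 0 belongs to Syz but does NOT belong to Z. (This is the key step showing R = S/I_F is not Koszul.) -/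

import Mathlib

open MvPolynomial

/-- Index type for the monomial generators `x_a x_b` of `I_F`: pairs of cyclic
distance at least 3. -/
abbrev MonIdx (c : ℕ) [NeZero c] : Type :=
  {p : ZMod c × ZMod c // 3 ≤ (p.1 - p.2).val ∧ 3 ≤ (p.2 - p.1).val}

/-- Index type for the full quadric generating set of `I_F`: the binomials `q_i`
(indexed by `ℤ/cℤ`) together with the monomials `x_a x_b`. -/
abbrev GenIdx (c : ℕ) [NeZero c] : Type := ZMod c ⊕ MonIdx c

/-- The quadric generators of `I_F`: `q_i = x_i² − x_{i−1}x_{i−3}` and the monomials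
`x_a x_b` for pairs of cyclic distance `≥ 3`. -/
noncomputable def gens (c : ℕ) [NeZero c] : GenIdx c → MvPolynomial (ZMod c) ℚ :=
  Sum.elim (fun i => X i ^ 2 - X (i - 1) * X (i - 3))
    (fun p => X p.val.1 * X p.val.2)

/-- The quadratic syzygy `u`: coordinate `x_{i−1} x_{i−2}` on the generator `q_i`,
and `0` on each monomial generator. -/
noncomputable def uSyz (c : ℕ) [NeZero c] : GenIdx c → MvPolynomial (ZMod c) ℚ :=
  Sum.elim (fun i => X (i - 1) * X (i - 2)) (fun _ => 0)

/-- The submodule `Z` of the syzygy module generated by (i) all syzygies whose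
coordinates are homogeneous linear forms and (ii) all Koszul syzygies
`g_β e_α − g_α e_β`. -/
noncomputable def linKoszulSub (c : ℕ) [NeZero c] :
    Submodule (MvPolynomial (ZMod c) ℚ) (GenIdx c → MvPolynomial (ZMod c) ℚ) :=
  Submodule.span _
    ({v | (∑ α : GenIdx c, v α * gens c α = 0) ∧
        ∀ α : GenIdx c, v α ∈ homogeneousSubmodule (ZMod c) ℚ 1} ∪
     {v | ∃ α β : GenIdx c,
        v = gens c β • (Pi.single α 1 : GenIdx c → MvPolynomial (ZMod c) ℚ)
          - gens c α • (Pi.single β 1 : GenIdx c → MvPolynomial (ZMod c) ℚ)})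

/-!
Let `Ψ(w)` be the sum over `i` of the coefficient of `x_{i-1} x_{i-2}` (the coordinate of `u` on
`q_i`) in the coordinate `w_{q_i}`. Then `Ψ(u) = c ≠ 0`, whereas
`Ψ(p • w) = 0` for every polynomial `p` and every generator `w` of `Z`; as the tuples with this
property form a submodule, `u ∉ Z`. For a Koszul syzygy every coordinate lies in `I_F`, and
`x_{i-1} x_{i-2}` (cyclic distance 1) occurs in no quadric generator, hence in no element of `I_F`.
For a linear syzygy `w`, comparing the coefficients of `x_i² x_{i-1}` and of `x_i² x_{i-2}` in
`∑ w_α g_α = 0` shows that `w_{q_i}` involves neither `x_{i-1}` nor `x_{i-2}`, so no multiple of it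
contains `x_{i-1} x_{i-2}`.
-/

open Finsupp

theorem ZMod.natCast_ne_zero_of_lt {c n : ℕ} (h0 : n ≠ 0) (h : n < c) : (n : ZMod c) ≠ 0 := by
  rw [Ne, ZMod.natCast_eq_zero_iff]
  exact fun hd => absurd (Nat.le_of_dvd (Nat.pos_of_ne_zero h0) hd) (by omega)

theorem AddMonoidHom.map_smul_eq_zero_of_mem_span {R M A : Type*} [Semiring R] [AddCommMonoid M]
    [Module R M] [AddCommMonoid A] (f : M →+ A) {s : Set M}
    (hs : ∀ v ∈ s, ∀ r : R, f (r • v) = 0) {w : M} (hw : w ∈ Submodule.span R s) (r : R) :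
    f (r • w) = 0 := by
  induction hw using Submodule.span_induction generalizing r with
  | mem v hv => exact hs v hv r
  | zero => rw [smul_zero, map_zero]
  | add x y _ _ hx hy => rw [smul_add, map_add, hx, hy, add_zero]
  | smul a x _ hx => rw [smul_smul, hx]

section Exponents

variable {σ : Type*}

theorem Finsupp.mem_pair_of_single_add_single_le {a b x y : σ} {m n : ℕ}
    (h : single a 1 + single b 1 ≤ single x m + single y n) :
    (a = x ∨ a = y) ∧ (b = x ∨ b = y) := by
  classical
  have mem : ∀ t, 1 ≤ (single x m + single y n) t → t = x ∨ t = y := fun t ht => by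
    have ht : t ∈ (single x m + single y n).support := mem_support_iff.mpr (by omega)
    simpa using support_single_add_single_subset ht
  exact ⟨mem a (single_le_iff.mp (le_self_add.trans h)),
    mem b (single_le_iff.mp (le_add_self.trans h))⟩

theorem Finsupp.eq_of_single_two_le {k x y : σ} {m n : ℕ} (hn : n ≤ 1)
    (h : single k 2 ≤ single x m + single y n) : k = x := by
  classical
  by_contra hk
  have := single_le_iff.mp h
  rw [coe_add, Pi.add_apply, single_apply, if_neg (Ne.symm hk), single_apply] at this
  split_ifs at this <;> omega

theorem MvPolynomial.coeff_mul_X_mul_X {R : Type*} [CommSemiring R] (m : σ →₀ ℕ) (a b : σ)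
    (p : MvPolynomial σ R) :
    coeff m (p * (X a * X b)) =
      if single a 1 + single b 1 ≤ m then coeff (m - (single a 1 + single b 1)) p else 0 := by
  rw [X, X, monomial_mul, one_mul, coeff_mul_monomial', mul_one]

theorem MvPolynomial.coeff_mul_eq_zero_of_isHomogeneous_one {R : Type*} [CommSemiring R]
    {f : MvPolynomial σ R} (hf : f.IsHomogeneous 1) {m : σ →₀ ℕ}
    (hm : ∀ t, m t ≠ 0 → coeff (single t 1) f = 0) (p : MvPolynomial σ R) :
    coeff m (p * f) = 0 := by
  classical
  rw [coeff_mul]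
  refine Finset.sum_eq_zero fun ⟨d, e⟩ hde => ?_
  rw [Finset.HasAntidiagonal.mem_antidiagonal] at hde
  by_cases he : coeff e f = 0
  · rw [he, mul_zero]
  obtain ⟨t, rfl⟩ : e ∈ Set.range (single · 1) := by
    rw [range_single_one]
    by_contra hdeg
    exact he (hf.coeff_eq_zero hdeg)
  rw [hm t (by simp [← hde]), mul_zero]

end Exponents

section Cyclic

variable {c : ℕ}

theorem not_single_add_single_le_of_far {a b x y : ZMod c} (hab : 3 ≤ (a - b).val)
    (hba : 3 ≤ (b - a).val) {d : ℕ} (hxy : x - y = d) (hd : d < 3) {m n : ℕ} :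
    ¬ single a 1 + single b 1 ≤ single x m + single y n := by
  have hval : (x - y).val < 3 := by
    rw [hxy, ZMod.val_natCast]
    exact (Nat.mod_le d c).trans_lt hd
  intro h
  obtain ⟨rfl | rfl, rfl | rfl⟩ := mem_pair_of_single_add_single_le h
  · simp at hab
  · omega
  · omega
  · simp at hab

theorem not_single_sub_one_add_single_sub_three_le (hc : 5 ≤ c) {k x y : ZMod c}
    (hxy : x - y = 1) {m n : ℕ} :
    ¬ single (k - 1) 1 + single (k - 3) 1 ≤ single x m + single y n := by
  intro h
  obtain ⟨h1 | h1, h3 | h3⟩ := mem_pair_of_single_add_single_le h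
  · exact ZMod.natCast_ne_zero_of_lt (n := 2) (by norm_num) (by omega : 2 < c)
      (by linear_combination h1 - h3)
  · exact ZMod.natCast_ne_zero_of_lt (n := 1) (by norm_num) (by omega : 1 < c)
      (by linear_combination h1 - h3 + hxy)
  · exact ZMod.natCast_ne_zero_of_lt (n := 3) (by norm_num) (by omega : 3 < c)
      (by linear_combination h1 - h3 - hxy)
  · exact ZMod.natCast_ne_zero_of_lt (n := 2) (by norm_num) (by omega : 2 < c)
      (by linear_combination h1 - h3)

theorem eq_add_one_of_single_sub_one_add_single_sub_three_le (hc : 5 ≤ c) {k i : ZMod c}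
    {m n : ℕ} (h : single (k - 1) 1 + single (k - 3) 1 ≤ single i m + single (i - 2) n) :
    k = i + 1 := by
  obtain ⟨h1 | h1, h3 | h3⟩ := mem_pair_of_single_add_single_le h
  · exact absurd (by linear_combination h1 - h3)
      (ZMod.natCast_ne_zero_of_lt (n := 2) (by norm_num) (by omega : 2 < c))
  · linear_combination h1
  · exact absurd (by linear_combination h1 - h3)
      (ZMod.natCast_ne_zero_of_lt (n := 4) (by norm_num) (by omega : 4 < c))
  · exact absurd (by linear_combination h1 - h3)
      (ZMod.natCast_ne_zero_of_lt (n := 2) (by norm_num) (by omega : 2 < c))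

end Cyclic

section Syzygies

variable {c : ℕ} [NeZero c]

theorem coeff_mul_gens_inl (ν : ZMod c →₀ ℕ) (k : ZMod c) (p : MvPolynomial (ZMod c) ℚ) :
    coeff ν (p * gens c (.inl k)) =
      (if single k 2 ≤ ν then coeff (ν - single k 2) p else 0) -
        if single (k - 1) 1 + single (k - 3) 1 ≤ ν then
          coeff (ν - (single (k - 1) 1 + single (k - 3) 1)) p else 0 := by
  rw [gens, Sum.elim_inl, mul_sub, coeff_sub, X_pow_eq_monomial, coeff_mul_monomial', mul_one,
    coeff_mul_X_mul_X]

theorem coeff_mul_gens_inr (ν : ZMod c →₀ ℕ) (mi : MonIdx c) (p : MvPolynomial (ZMod c) ℚ) :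
    coeff ν (p * gens c (.inr mi)) =
      if single mi.1.1 1 + single mi.1.2 1 ≤ ν then
        coeff (ν - (single mi.1.1 1 + single mi.1.2 1)) p else 0 :=
  coeff_mul_X_mul_X ν _ _ p

theorem coeff_X_sub_one_eq_zero_of_syzygy (hc : 5 ≤ c) {v : GenIdx c → MvPolynomial (ZMod c) ℚ}
    (hv : ∑ α, v α * gens c α = 0) (i : ZMod c) :
    coeff (single (i - 1) 1) (v (.inl i)) = 0 := by
  set ν : ZMod c →₀ ℕ := single i 2 + single (i - 1) 1
  have hi : i - (i - 1) = (1 : ℕ) := by push_cast; ring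
  have hq (k : ZMod c) : coeff ν (v (.inl k) * gens c (.inl k)) =
      if k = i then coeff (single (i - 1) 1) (v (.inl i)) else 0 := by
    rw [coeff_mul_gens_inl,
      if_neg (not_single_sub_one_add_single_sub_three_le hc (by exact_mod_cast hi)), sub_zero]
    split_ifs with hle hk hk
    · rw [hk, add_tsub_cancel_left]
    · exact absurd (eq_of_single_two_le le_rfl hle) hk
    · exact absurd le_self_add (hk ▸ hle)
    · rfl
  have hfar (mi : MonIdx c) : coeff ν (v (.inr mi) * gens c (.inr mi)) = 0 := by
    rw [coeff_mul_gens_inr, if_neg (not_single_add_single_le_of_far mi.2.1 mi.2.2 hi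
      (by norm_num))]
  simpa [ν, coeff_sum, hq, hfar] using congrArg (coeff ν) hv

theorem coeff_X_sub_two_eq_zero_of_syzygy (hc : 5 ≤ c) {v : GenIdx c → MvPolynomial (ZMod c) ℚ}
    (hv : ∑ α, v α * gens c α = 0) (i : ZMod c) :
    coeff (single (i - 2) 1) (v (.inl i)) = 0 := by
  set ν : ZMod c →₀ ℕ := single i 2 + single (i - 2) 1
  have hi : i - (i - 2) = (2 : ℕ) := by push_cast; ring
  have hν : ν = single i 1 + (single i 1 + single (i - 2) 1) := by
    rw [← add_assoc, ← single_add]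
  have hq (k : ZMod c) : coeff ν (v (.inl k) * gens c (.inl k)) =
      (if k = i then coeff (single (i - 2) 1) (v (.inl i)) else 0) -
        if k = i + 1 then coeff (single i 1) (v (.inl (i + 1))) else 0 := by
    rw [coeff_mul_gens_inl]
    congr 1
    · split_ifs with hle hk hk
      · rw [hk, add_tsub_cancel_left]
      · exact absurd (eq_of_single_two_le le_rfl hle) hk
      · exact absurd le_self_add (hk ▸ hle)
      · rfl
    · split_ifs with hle hk hk
      · subst hk
        rw [show i + 1 - 1 = i by ring, show i + 1 - 3 = i - 2 by ring, hν, add_tsub_cancel_right]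
      · exact absurd (eq_add_one_of_single_sub_one_add_single_sub_three_le hc hle) hk
      · subst hk
        refine absurd ?_ hle
        rw [show i + 1 - 1 = i by ring, show i + 1 - 3 = i - 2 by ring, hν]
        exact le_add_self
      · rfl
  have hfar (mi : MonIdx c) : coeff ν (v (.inr mi) * gens c (.inr mi)) = 0 := by
    rw [coeff_mul_gens_inr, if_neg (not_single_add_single_le_of_far mi.2.1 mi.2.2 hi
      (by norm_num))]
  have h := congrArg (coeff ν) hv
  simp only [Fintype.sum_sum_type, coeff_add, coeff_sum, hq, hfar, Finset.sum_sub_distrib,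
    Finset.sum_ite_eq', Finset.mem_univ, if_true, Finset.sum_const_zero, add_zero, coeff_zero,
    sub_eq_zero] at h
  rw [h, ← coeff_X_sub_one_eq_zero_of_syzygy hc hv (i + 1), add_sub_cancel_right]

end Syzygies

section Functional

variable {c : ℕ} [NeZero c]

noncomputable def uExp (i : ZMod c) : ZMod c →₀ ℕ := single (i - 1) 1 + single (i - 2) 1

theorem coeff_uExp_mul_gens (hc : 5 ≤ c) (i : ZMod c) (p : MvPolynomial (ZMod c) ℚ)
    (γ : GenIdx c) : coeff (uExp i) (p * gens c γ) = 0 := by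
  have hi : i - 1 - (i - 2) = (1 : ℕ) := by push_cast; ring
  unfold uExp
  rcases γ with k | mi
  · rw [coeff_mul_gens_inl,
      if_neg (not_single_sub_one_add_single_sub_three_le hc (by exact_mod_cast hi)), if_neg,
      sub_zero]
    intro h
    have h1 : k = i - 1 := eq_of_single_two_le le_rfl h
    have h2 : k = i - 2 := eq_of_single_two_le le_rfl (add_comm (single (i - 1) 1) _ ▸ h)
    exact ZMod.natCast_ne_zero_of_lt (n := 1) one_ne_zero (by omega : 1 < c)
      (by linear_combination h2 - h1)
  · rw [coeff_mul_gens_inr, if_neg (not_single_add_single_le_of_far mi.2.1 mi.2.2 hi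
      (by norm_num))]

theorem coeff_uExp_eq_zero_of_mem_span (hc : 5 ≤ c) (i : ZMod c) {f : MvPolynomial (ZMod c) ℚ}
    (hf : f ∈ Ideal.span (Set.range (gens c))) : coeff (uExp i) f = 0 := by
  obtain ⟨a, rfl⟩ := Ideal.mem_span_range_iff_exists_fun.mp hf
  rw [coeff_sum]
  exact Finset.sum_eq_zero fun γ _ => coeff_uExp_mul_gens hc i (a γ) γ

variable (c) in
noncomputable def psi : (GenIdx c → MvPolynomial (ZMod c) ℚ) →+ ℚ :=
  ∑ i : ZMod c, (coeffAddMonoidHom (uExp i)).comp (Pi.evalAddMonoidHom _ (.inl i))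

theorem psi_apply (w : GenIdx c → MvPolynomial (ZMod c) ℚ) :
    psi c w = ∑ i, coeff (uExp i) (w (.inl i)) := by
  simp [psi]

theorem psi_uSyz : psi c (uSyz c) = c := by
  simp [psi_apply, uSyz, uExp, X, monomial_mul]

theorem psi_smul_eq_zero_of_linear_syzygy (hc : 5 ≤ c) {v : GenIdx c → MvPolynomial (ZMod c) ℚ}
    (hv : ∑ α, v α * gens c α = 0) (hlin : ∀ α, v α ∈ homogeneousSubmodule (ZMod c) ℚ 1)
    (p : MvPolynomial (ZMod c) ℚ) : psi c (p • v) = 0 := by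
  rw [psi_apply]
  refine Finset.sum_eq_zero fun i _ => coeff_mul_eq_zero_of_isHomogeneous_one (hlin _) ?_ p
  intro t ht
  have ht' : t ∈ (uExp i).support := mem_support_iff.mpr ht
  obtain rfl | rfl : t = i - 1 ∨ t = i - 2 := by
    simpa using support_single_add_single_subset ht'
  · exact coeff_X_sub_one_eq_zero_of_syzygy hc hv i
  · exact coeff_X_sub_two_eq_zero_of_syzygy hc hv i

theorem psi_smul_eq_zero_of_koszul (hc : 5 ≤ c) (α β : GenIdx c) (p : MvPolynomial (ZMod c) ℚ) :
    psi c (p • (gens c β • (Pi.single α 1 : GenIdx c → MvPolynomial (ZMod c) ℚ) -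
      gens c α • (Pi.single β 1 : GenIdx c → MvPolynomial (ZMod c) ℚ))) = 0 := by
  have hg (γ : GenIdx c) : gens c γ ∈ Ideal.span (Set.range (gens c)) :=
    Ideal.subset_span ⟨γ, rfl⟩
  rw [psi_apply]
  refine Finset.sum_eq_zero fun i _ => coeff_uExp_eq_zero_of_mem_span hc i ?_
  simp only [Pi.smul_apply, Pi.sub_apply, smul_eq_mul]
  exact Ideal.mul_mem_left _ _ (sub_mem (Ideal.mul_mem_right _ _ (hg β))
    (Ideal.mul_mem_right _ _ (hg α)))

theorem psi_smul_eq_zero_of_mem_linKoszulSub (hc : 5 ≤ c)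
    {w : GenIdx c → MvPolynomial (ZMod c) ℚ} (hw : w ∈ linKoszulSub c)
    (p : MvPolynomial (ZMod c) ℚ) : psi c (p • w) = 0 := by
  refine (psi c).map_smul_eq_zero_of_mem_span ?_ hw p
  rintro v (⟨hv, hlin⟩ | ⟨α, β, rfl⟩)
  · exact psi_smul_eq_zero_of_linear_syzygy hc hv hlin
  · exact psi_smul_eq_zero_of_koszul hc α β

end Functional

theorem sum_uSyz_mul_gens (c : ℕ) [NeZero c] : ∑ α, uSyz c α * gens c α = 0 := by
  have shift := Equiv.sum_comp (Equiv.addRight (1 : ZMod c))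
    fun i => (X (i - 1) * X (i - 2) * (X (i - 1) * X (i - 3)) : MvPolynomial (ZMod c) ℚ)
  simp only [Fintype.sum_sum_type, uSyz, gens, Sum.elim_inl, Sum.elim_inr, zero_mul,
    Finset.sum_const_zero, add_zero, mul_sub, Finset.sum_sub_distrib, sub_eq_zero]
  rw [← shift]
  refine Finset.sum_congr rfl fun i _ => ?_
  simp only [Equiv.coe_addRight, add_sub_cancel_right]
  ring_nf

/-- For `c ≥ 7`, the quadratic tuple `u` is a first syzygy on the quadric generators
of `I_F`, but it does not belong to the submodule `Z` generated by the linear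
syzygies and the Koszul syzygies.  This is the key step showing `S/I_F` is not
Koszul. -/
theorem uSyz_is_syzygy_not_in_linKoszul (c : ℕ) (hc : 7 ≤ c) [NeZero c] :
    (∑ α : GenIdx c, uSyz c α * gens c α = 0) ∧ uSyz c ∉ linKoszulSub c := by
  refine ⟨sum_uSyz_mul_gens c, fun hu => ?_⟩
  have h := psi_smul_eq_zero_of_mem_linKoszulSub (by omega) hu 1
  rw [one_smul, psi_uSyz] at h
  exact NeZero.ne c (by exact_mod_cast h)
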